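/- Let s₁, s₂ be positive integers, and let ζ₁ ≠ ζ₂ be points of (-π, π]. For ℓ = 1,2 and j = 1,…,s_ℓ define the normalized limit vectors ũ_j^{(ℓ)} = u_j^{(ℓ)}/‖u_j^{(ℓ)}‖ where (u_j^{(ℓ)})_k = (ik)^{j-1} e^{ikζ_ℓ}, k = 0,…,N. Then for all N ≥ max(s₁,s₂) - 1 with N ≥ 1, and all p ∈ {1,…,s₁}, q ∈ {1,…,s₂}: |⟨ũ_p^{(1)}, ũ_q^{(2)}⟩| ≤ π√((2s₁-1)(2s₂-1)) / (Δ(ζ₁,ζ₂) · N). -/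

import Mathlib

open Complex Real

/-- The wrap-around distance `Δ(x,y) = |Arg e^{i(x-y)}| ∈ [0, π]`. -/
noncomputable def wrapDist (x y : ℝ) : ℝ :=
  |Complex.arg (Complex.exp (Complex.I * (x - y)))|

lemma abel_id (a : ℕ → ℂ) (z : ℂ) (N : ℕ) :
    (1 - z) * ∑ k ∈ Finset.range (N+1), a k * z^k
      = a 0 + (∑ k ∈ Finset.range N, (a (k+1) - a k) * z^(k+1)) - a N * z^(N+1) := by
  induction N with
  | zero => simp; ring
  | succ n ih =>
    rw [Finset.sum_range_succ, mul_add, ih, Finset.sum_range_succ]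
    ring

lemma abel_bound (m N : ℕ) (z : ℂ) (hz : ‖z‖ = 1) :
    ‖1 - z‖ * ‖∑ k ∈ Finset.range (N+1), ((k:ℂ))^m * z^k‖ ≤ 2 * (N:ℝ)^m := by
  rw [← norm_mul, abel_id (fun k => ((k:ℕ):ℂ)^m) z N]
  have hterm : ∀ k : ℕ, ‖(((k+1:ℕ):ℂ)^m - ((k:ℕ):ℂ)^m) * z^(k+1)‖ = ((k+1:ℕ):ℝ)^m - ((k:ℕ):ℝ)^m := by
    intro k
    rw [norm_mul, norm_pow, hz, one_pow, mul_one]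
    have h1 : ((k:ℕ):ℝ)^m ≤ ((k+1:ℕ):ℝ)^m := pow_le_pow_left₀ (by positivity) (by push_cast; linarith) m
    have h2 : (((k+1:ℕ):ℂ)^m - ((k:ℕ):ℂ)^m) = ((((k+1:ℕ):ℝ)^m - ((k:ℕ):ℝ)^m : ℝ) : ℂ) := by push_cast; ring
    rw [h2, Complex.norm_real, Real.norm_eq_abs, _root_.abs_of_nonneg (by linarith)]
  calc ‖((0:ℕ):ℂ)^m + (∑ k ∈ Finset.range N, (((k+1:ℕ):ℂ)^m - ((k:ℕ):ℂ)^m) * z^(k+1)) - ((N:ℕ):ℂ)^m * z^(N+1)‖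
      ≤ ‖((0:ℕ):ℂ)^m + (∑ k ∈ Finset.range N, (((k+1:ℕ):ℂ)^m - ((k:ℕ):ℂ)^m) * z^(k+1))‖ + ‖((N:ℕ):ℂ)^m * z^(N+1)‖ := norm_sub_le _ _
    _ ≤ ‖((0:ℕ):ℂ)^m‖ + ‖(∑ k ∈ Finset.range N, (((k+1:ℕ):ℂ)^m - ((k:ℕ):ℂ)^m) * z^(k+1))‖ + ‖((N:ℕ):ℂ)^m * z^(N+1)‖ := by
        gcongr; exact norm_add_le _ _
    _ ≤ (0:ℝ)^m + (∑ k ∈ Finset.range N, (((k+1:ℕ):ℝ)^m - ((k:ℕ):ℝ)^m)) + (N:ℝ)^m := by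
        gcongr
        · simp
        · exact (norm_sum_le _ _).trans (le_of_eq (Finset.sum_congr rfl fun k _ => hterm k))
        · rw [norm_mul, norm_pow, norm_pow, hz, one_pow, mul_one]; simp
    _ ≤ 2 * (N:ℝ)^m := by
        rw [Finset.sum_range_sub (fun k => ((k:ℕ):ℝ)^m)]
        simp only [Nat.cast_zero]
        linarith

lemma sum_pow_lower (m N : ℕ) :
    (N:ℝ)^(m+1) ≤ (m+1) * ∑ k ∈ Finset.range (N+1), (k:ℝ)^m := by
  have hstep : ∀ k : ℕ, ((k+1:ℕ):ℝ)^(m+1) - ((k:ℕ):ℝ)^(m+1) ≤ (m+1) * ((k+1:ℕ):ℝ)^m := by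
    intro k
    have := geom_sum₂_mul (((k+1:ℕ):ℝ)) (((k:ℕ):ℝ)) (m+1)
    have hx : ((k+1:ℕ):ℝ) - ((k:ℕ):ℝ) = 1 := by push_cast; ring
    rw [hx, mul_one] at this
    rw [← this]
    have hb : ∀ i ∈ Finset.range (m+1), ((k+1:ℕ):ℝ)^i * ((k:ℕ):ℝ)^(m-i) ≤ ((k+1:ℕ):ℝ)^m := by
      intro i hi
      rw [Finset.mem_range] at hi
      calc ((k+1:ℕ):ℝ)^i * ((k:ℕ):ℝ)^(m-i) ≤ ((k+1:ℕ):ℝ)^i * ((k+1:ℕ):ℝ)^(m-i) :=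
            mul_le_mul_of_nonneg_left (pow_le_pow_left₀ (by positivity) (by push_cast; linarith) _) (by positivity)
        _ = ((k+1:ℕ):ℝ)^m := by rw [← pow_add]; congr 1; omega
    calc ∑ i ∈ Finset.range (m+1), ((k+1:ℕ):ℝ)^i * ((k:ℕ):ℝ)^(m+1-1-i)
        ≤ ∑ i ∈ Finset.range (m+1), ((k+1:ℕ):ℝ)^m := by
          apply Finset.sum_le_sum; simpa using hb
      _ = (m+1) * ((k+1:ℕ):ℝ)^m := by rw [Finset.sum_const, Finset.card_range]; push_cast; ring
  have htel : (N:ℝ)^(m+1) = ∑ k ∈ Finset.range N, (((k+1:ℕ):ℝ)^(m+1) - ((k:ℕ):ℝ)^(m+1)) := by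
    rw [Finset.sum_range_sub (fun k => ((k:ℕ):ℝ)^(m+1))]; simp
  rw [htel, Finset.sum_range_succ' (fun k => (k:ℝ)^m)]
  have h0 : (0:ℝ) ≤ ((m:ℝ)+1) * ((0:ℕ):ℝ)^m + 0 := by positivity
  calc ∑ k ∈ Finset.range N, (((k+1:ℕ):ℝ)^(m+1) - ((k:ℕ):ℝ)^(m+1))
      ≤ ∑ k ∈ Finset.range N, ((m:ℝ)+1) * ((k+1:ℕ):ℝ)^m := by
        apply Finset.sum_le_sum; intro i _
        have := hstep i; push_cast at this ⊢; linarith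
    _ = ((m:ℝ)+1) * ∑ k ∈ Finset.range N, ((k+1:ℕ):ℝ)^m := by rw [Finset.mul_sum]
    _ ≤ ((m:ℝ)+1) * ((∑ k ∈ Finset.range N, (((k+1:ℕ)):ℝ)^m) + ((0:ℕ):ℝ)^m) := by
        have hnn : (0:ℝ) ≤ ((0:ℕ):ℝ)^m := by positivity
        nlinarith [hnn]

lemma one_sub_exp_lower (t : ℝ) :
    2 / Real.pi * |Complex.arg (Complex.exp (Complex.I * t))| ≤ ‖1 - Complex.exp (Complex.I * t)‖ := by
  set w := Complex.exp (Complex.I * t) with hw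
  have habs : ‖w‖ = 1 := by
    rw [hw, show Complex.I * (t:ℂ) = (t:ℂ) * Complex.I by ring]
    exact Complex.norm_exp_ofReal_mul_I t
  set δ := Complex.arg w with hδ
  have hwe : w = Complex.exp (δ * Complex.I) := by
    conv_lhs => rw [← Complex.norm_mul_exp_arg_mul_I w]
    rw [habs]; simp; rfl
  have hsq : ‖1 - w‖^2 = 2 - 2 * Real.cos δ := by
    rw [hwe, Complex.exp_mul_I]
    rw [show (1:ℂ) - (Complex.cos δ + Complex.sin δ * Complex.I)
        = Complex.ofReal (1 - Real.cos δ) + Complex.ofReal (-Real.sin δ) * Complex.I by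
      push_cast [Complex.ofReal_cos, Complex.ofReal_sin]; ring]
    rw [Complex.sq_norm, Complex.normSq_add_mul_I]
    nlinarith [Real.sin_sq_add_cos_sq δ]
  have hcos : Real.cos δ ≤ 1 - 2 / Real.pi ^ 2 * δ ^ 2 :=
    Real.cos_le_one_sub_mul_cos_sq (by
      rw [abs_le]; exact ⟨(Complex.neg_pi_lt_arg w).le, Complex.arg_le_pi w⟩)
  have hpi := Real.pi_pos
  have h1 : (2 / Real.pi * |δ|)^2 ≤ ‖1 - w‖^2 := by
    rw [hsq]
    have : (2 / Real.pi * |δ|)^2 = 4 / Real.pi^2 * δ^2 := by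
      rw [mul_pow, div_pow, _root_.sq_abs]; ring
    rw [this]
    have e : 4 / Real.pi^2*δ^2 = 2*(2/Real.pi^2*δ^2) := by ring
    linarith
  have h2 : 0 ≤ 2 / Real.pi * |δ| := by positivity
  nlinarith [norm_nonneg (1 - w)]

lemma norm_coeff (k j : ℕ) (ζ : ℝ) :
    ‖(Complex.I * (k:ℕ)) ^ j * Complex.exp (Complex.I * (k:ℕ) * ζ)‖ = (k:ℝ)^j := by
  rw [norm_mul, norm_pow, norm_mul]
  have h1 : ‖Complex.I‖ = 1 := by simp
  have h2 : ‖((k:ℕ):ℂ)‖ = (k:ℝ) := by simp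
  have h3 : ‖Complex.exp (Complex.I * (k:ℕ) * ζ)‖ = 1 := by
    rw [show Complex.I * ((k:ℕ):ℂ) * (ζ:ℂ) = (((k:ℝ)*ζ : ℝ):ℂ) * Complex.I by push_cast; ring]
    exact Complex.norm_exp_ofReal_mul_I _
  rw [h1, h2, h3, one_mul, mul_one]

lemma norm_sq_u {n : ℕ} (v : EuclideanSpace ℂ (Fin (n+1))) (j : ℕ) (ζ : ℝ)
    (hv : ∀ k : Fin (n+1), v k = (Complex.I * ((k:ℕ):ℂ)) ^ j * Complex.exp (Complex.I * (k:ℕ) * ζ)) :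
    ‖v‖^2 = ∑ k ∈ Finset.range (n+1), (k:ℝ)^(2*j) := by
  rw [EuclideanSpace.norm_eq, Real.sq_sqrt (by positivity)]
  rw [← Fin.sum_univ_eq_sum_range (fun k => (k:ℝ)^(2*j))]
  apply Finset.sum_congr rfl
  intro k _
  rw [hv k, norm_coeff, ← pow_mul, mul_comm j 2]

lemma inner_u {n : ℕ} (v w : EuclideanSpace ℂ (Fin (n+1))) (j₁ j₂ : ℕ) (ζ₁ ζ₂ : ℝ)
    (hv : ∀ k : Fin (n+1), v k = (Complex.I * ((k:ℕ):ℂ)) ^ j₁ * Complex.exp (Complex.I * (k:ℕ) * ζ₁))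
    (hw : ∀ k : Fin (n+1), w k = (Complex.I * ((k:ℕ):ℂ)) ^ j₂ * Complex.exp (Complex.I * (k:ℕ) * ζ₂)) :
    (inner ℂ v w : ℂ) = (-Complex.I)^j₁ * Complex.I^j₂ *
      ∑ k ∈ Finset.range (n+1), ((k:ℕ):ℂ)^(j₁+j₂) * (Complex.exp (Complex.I * ((ζ₂:ℂ) - (ζ₁:ℂ))))^k := by
  rw [PiLp.inner_apply]
  rw [← Fin.sum_univ_eq_sum_range (fun k => ((k:ℕ):ℂ)^(j₁+j₂) * (Complex.exp (Complex.I * ((ζ₂:ℂ) - (ζ₁:ℂ))))^k), Finset.mul_sum]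
  apply Finset.sum_congr rfl
  intro k _
  rw [hv k, hw k, RCLike.inner_apply]
  have hexp : Complex.exp (-(Complex.I * (k:ℕ) * ζ₁)) * Complex.exp (Complex.I * (k:ℕ) * ζ₂)
      = (Complex.exp (Complex.I * ((ζ₂:ℂ) - (ζ₁:ℂ))))^(k:ℕ) := by
    rw [← Complex.exp_add, ← Complex.exp_nat_mul]
    congr 1; push_cast; ring
  rw [map_mul, map_pow, ← Complex.exp_conj]
  have h1 : (starRingEnd ℂ) (Complex.I * ((k:ℕ):ℂ)) = -(Complex.I * ((k:ℕ):ℂ)) := by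
    rw [map_mul, Complex.conj_I]; simp
  have h2 : (starRingEnd ℂ) (Complex.I * ((k:ℕ):ℂ) * (ζ₁:ℂ)) = -(Complex.I * ((k:ℕ):ℂ) * (ζ₁:ℂ)) := by
    rw [map_mul, map_mul, Complex.conj_I, Complex.conj_ofReal]; simp
  rw [h1, h2, ← hexp, pow_add]
  ring_nf

set_option maxHeartbeats 1600000 in
theorem normalized_limit_vectors_inner_bound (s₁ s₂ : ℕ) (hs₁ : 1 ≤ s₁) (hs₂ : 1 ≤ s₂)
    (ζ₁ ζ₂ : ℝ) (hζ₁ : ζ₁ ∈ Set.Ioc (-Real.pi) Real.pi)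
    (hζ₂ : ζ₂ ∈ Set.Ioc (-Real.pi) Real.pi) (hne : ζ₁ ≠ ζ₂)
    (N : ℕ) (hN : 1 ≤ N) (hNs : max s₁ s₂ - 1 ≤ N)
    (u : ℝ → ℕ → EuclideanSpace ℂ (Fin (N + 1)))
    (hu : ∀ ζ j, ∀ k : Fin (N + 1),
      u ζ j k = (Complex.I * (k : ℕ)) ^ (j - 1) * Complex.exp (Complex.I * (k : ℕ) * ζ)) :
    ∀ p q, 1 ≤ p → p ≤ s₁ → 1 ≤ q → q ≤ s₂ →
      ‖(inner ℂ (‖u ζ₁ p‖⁻¹ • u ζ₁ p) (‖u ζ₂ q‖⁻¹ • u ζ₂ q) : ℂ)‖ ≤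
        Real.pi * Real.sqrt ((2 * s₁ - 1) * (2 * s₂ - 1)) / (wrapDist ζ₁ ζ₂ * N) := by
  intro p q hp1 hps hq1 hqs
  have hpi := Real.pi_pos
  set Δ := wrapDist ζ₁ ζ₂ with hΔdef
  -- Δ > 0
  have hΔpos : 0 < Δ := by
    rw [hΔdef, wrapDist]
    rcases eq_or_ne (Complex.arg (Complex.exp (Complex.I * ((ζ₁:ℂ) - (ζ₂:ℂ))))) 0 with h0 | h0
    · exfalso
      have habs : ‖(Complex.exp (Complex.I * ((ζ₁:ℂ) - (ζ₂:ℂ))))‖ = 1 := by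
        rw [show Complex.I * ((ζ₁:ℂ) - (ζ₂:ℂ)) = (((ζ₁ - ζ₂ : ℝ)):ℂ) * Complex.I by push_cast; ring]
        exact Complex.norm_exp_ofReal_mul_I _
      have hone : Complex.exp (Complex.I * ((ζ₁:ℂ) - (ζ₂:ℂ))) = 1 := by
        conv_lhs => rw [← Complex.norm_mul_exp_arg_mul_I (Complex.exp (Complex.I * ((ζ₁:ℂ) - (ζ₂:ℂ))))]
        rw [habs, h0]; simp
      rw [Complex.exp_eq_one_iff] at hone
      obtain ⟨n, hn⟩ := hone
      have hc : ((ζ₁ - ζ₂ : ℝ) : ℂ) * Complex.I = ((n * (2 * Real.pi) : ℝ) : ℂ) * Complex.I := by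
        push_cast
        rw [show ((ζ₁:ℂ) - (ζ₂:ℂ)) * Complex.I = Complex.I * ((ζ₁:ℂ) - (ζ₂:ℂ)) by ring, hn]
        push_cast [Complex.ofReal_cos]
        ring
      have hr : ζ₁ - ζ₂ = n * (2 * Real.pi) := by
        have := mul_right_cancel₀ Complex.I_ne_zero hc
        exact_mod_cast this
      have hb1 : ζ₁ - ζ₂ < 2 * Real.pi := by
        obtain ⟨h1, h2⟩ := hζ₁; obtain ⟨h3, h4⟩ := hζ₂; linarith
      have hb2 : -(2 * Real.pi) < ζ₁ - ζ₂ := by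
        obtain ⟨h1, h2⟩ := hζ₁; obtain ⟨h3, h4⟩ := hζ₂; linarith
      have hn0 : n = 0 := by
        have h5 : ((n:ℝ)) * (2 * Real.pi) < 2 * Real.pi := hr ▸ hb1
        have h6 : -(2 * Real.pi) < ((n:ℝ)) * (2 * Real.pi) := hr ▸ hb2
        have : (-1 : ℝ) < (n:ℝ) ∧ (n:ℝ) < 1 := by constructor <;> nlinarith
        have : (-1 : ℤ) < n ∧ n < 1 := by exact_mod_cast this
        omega
      rw [hn0] at hr
      simp at hr
      exact hne (by linarith)
    · exact abs_pos.mpr h0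
  -- the geometric bound
  set z := Complex.exp (Complex.I * ((ζ₂:ℂ) - (ζ₁:ℂ))) with hz
  have hzabs : ‖z‖ = 1 := by
    rw [hz, show Complex.I * ((ζ₂:ℂ) - (ζ₁:ℂ)) = (((ζ₂ - ζ₁ : ℝ)):ℂ) * Complex.I by push_cast; ring]
    exact Complex.norm_exp_ofReal_mul_I _
  set w := Complex.exp (Complex.I * ((ζ₁:ℂ) - (ζ₂:ℂ))) with hw
  have hconj : (starRingEnd ℂ) w = z := by
    rw [hw, hz, ← Complex.exp_conj]
    congr 1
    rw [map_mul, Complex.conj_I, map_sub, Complex.conj_ofReal, Complex.conj_ofReal]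
    ring
  have hnorm1z : ‖1 - z‖ = ‖1 - w‖ := by
    rw [← hconj, show (1:ℂ) - (starRingEnd ℂ) w = (starRingEnd ℂ) (1 - w) by rw [map_sub, map_one]]
    exact RCLike.norm_conj _
  have hBlow : 2 / Real.pi * Δ ≤ ‖1 - z‖ := by
    rw [hnorm1z, hΔdef, wrapDist]
    have := one_sub_exp_lower (ζ₁ - ζ₂)
    rw [show ((ζ₁ - ζ₂ : ℝ):ℂ) = (ζ₁:ℂ) - (ζ₂:ℂ) by push_cast; ring] at this
    exact this
  -- inner product value
  set m₁ := p - 1 with hm₁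
  set m₂ := q - 1 with hm₂
  set A := ‖∑ k ∈ Finset.range (N+1), ((k:ℕ):ℂ)^(m₁+m₂) * z^k‖ with hA
  have hinner : ‖(inner ℂ (u ζ₁ p) (u ζ₂ q) : ℂ)‖ = A := by
    rw [inner_u (u ζ₁ p) (u ζ₂ q) m₁ m₂ ζ₁ ζ₂ (fun k => hu ζ₁ p k) (fun k => hu ζ₂ q k)]
    rw [norm_mul]
    have hc1 : ‖(-Complex.I)^m₁ * Complex.I^m₂‖ = 1 := by
      rw [norm_mul, norm_pow, norm_pow, norm_neg, Complex.norm_I, one_pow, one_pow, one_mul]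
    rw [hc1, one_mul, hA]
  have habel : ‖1 - z‖ * A ≤ 2 * (N:ℝ)^(m₁+m₂) := abel_bound (m₁+m₂) N z hzabs
  -- norms of u
  set n₁ := ‖u ζ₁ p‖ with hn₁
  set n₂ := ‖u ζ₂ q‖ with hn₂
  have hn₁sq : n₁^2 = ∑ k ∈ Finset.range (N+1), (k:ℝ)^(2*m₁) :=
    norm_sq_u (u ζ₁ p) m₁ ζ₁ (fun k => hu ζ₁ p k)
  have hn₂sq : n₂^2 = ∑ k ∈ Finset.range (N+1), (k:ℝ)^(2*m₂) :=
    norm_sq_u (u ζ₂ q) m₂ ζ₂ (fun k => hu ζ₂ q k)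
  have hlow₁ : (N:ℝ)^(2*m₁+1) ≤ (2*(m₁:ℝ)+1) * n₁^2 := by
    have h := sum_pow_lower (2*m₁) N
    rw [← hn₁sq] at h; push_cast at h ⊢; linarith
  have hlow₂ : (N:ℝ)^(2*m₂+1) ≤ (2*(m₂:ℝ)+1) * n₂^2 := by
    have h := sum_pow_lower (2*m₂) N
    rw [← hn₂sq] at h; push_cast at h ⊢; linarith
  have hNpos : (0:ℝ) < N := by exact_mod_cast hN
  have hn₁pos : 0 < n₁ := by
    have h1 : (0:ℝ) < (N:ℝ)^(2*m₁+1) := by positivity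
    have h2 : (0:ℝ) < (2*(m₁:ℝ)+1) := by positivity
    have hsqpos : 0 < n₁^2 := by nlinarith [hlow₁]
    have hne0 : n₁ ≠ 0 := by intro h; rw [h] at hsqpos; simp at hsqpos
    exact lt_of_le_of_ne (norm_nonneg _) (Ne.symm hne0)
  have hn₂pos : 0 < n₂ := by
    have h1 : (0:ℝ) < (N:ℝ)^(2*m₂+1) := by positivity
    have h2 : (0:ℝ) < (2*(m₂:ℝ)+1) := by positivity
    have hsqpos : 0 < n₂^2 := by nlinarith [hlow₂]
    have hne0 : n₂ ≠ 0 := by intro h; rw [h] at hsqpos; simp at hsqpos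
    exact lt_of_le_of_ne (norm_nonneg _) (Ne.symm hne0)
  -- rewrite goal LHS
  have hLHS : ‖(inner ℂ (n₁⁻¹ • u ζ₁ p) (n₂⁻¹ • u ζ₂ q) : ℂ)‖ = n₁⁻¹ * n₂⁻¹ * A := by
    rw [RCLike.real_smul_eq_coe_smul (K := ℂ), RCLike.real_smul_eq_coe_smul (K := ℂ)]
    rw [inner_smul_left, inner_smul_right]
    rw [norm_mul, norm_mul, RCLike.norm_conj, RCLike.norm_ofReal, RCLike.norm_ofReal,
      _root_.abs_of_nonneg (inv_nonneg.mpr hn₁pos.le), _root_.abs_of_nonneg (inv_nonneg.mpr hn₂pos.le), hinner]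
    ring
  rw [hLHS]
  -- final arithmetic
  set SA := Real.sqrt ((2 * (s₁:ℝ) - 1) * (2 * (s₂:ℝ) - 1)) with hSA
  set SA' := Real.sqrt ((2*(m₁:ℝ)+1) * (2*(m₂:ℝ)+1)) with hSA'
  have hApos : 0 ≤ A := norm_nonneg _
  have hstep1 : A * Δ ≤ Real.pi * (N:ℝ)^(m₁+m₂) := by
    have h1 : Δ ≤ Real.pi / 2 * ‖1 - z‖ := by
      have h2 := mul_le_mul_of_nonneg_left hBlow (by positivity : (0:ℝ) ≤ Real.pi/2)
      calc Δ = Real.pi/2 * (2/Real.pi*Δ) := by field_simp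
        _ ≤ Real.pi/2 * ‖1 - z‖ := h2
    calc A * Δ ≤ A * (Real.pi / 2 * ‖1 - z‖) := mul_le_mul_of_nonneg_left h1 hApos
      _ = Real.pi / 2 * (‖1 - z‖ * A) := by ring
      _ ≤ Real.pi / 2 * (2 * (N:ℝ)^(m₁+m₂)) := mul_le_mul_of_nonneg_left habel (by positivity)
      _ = Real.pi * (N:ℝ)^(m₁+m₂) := by ring
  have hSA'nn : 0 ≤ SA' := Real.sqrt_nonneg _
  have hstep2 : (N:ℝ)^(m₁+m₂+1) ≤ SA' * (n₁ * n₂) := by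
    have hsq : ((N:ℝ)^(m₁+m₂+1))^2 ≤ (SA' * (n₁ * n₂))^2 := by
      have he : (SA' * (n₁ * n₂))^2 = ((2*(m₁:ℝ)+1) * n₁^2) * ((2*(m₂:ℝ)+1) * n₂^2) := by
        rw [mul_pow, hSA', Real.sq_sqrt (by positivity)]
        ring
      have he2 : ((N:ℝ)^(m₁+m₂+1))^2 = (N:ℝ)^(2*m₁+1) * (N:ℝ)^(2*m₂+1) := by
        rw [← pow_add, ← pow_mul]
        congr 1
        ring
      rw [he, he2]
      exact mul_le_mul hlow₁ hlow₂ (by positivity) (by positivity)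
    calc (N:ℝ)^(m₁+m₂+1) = Real.sqrt (((N:ℝ)^(m₁+m₂+1))^2) := by
          rw [Real.sqrt_sq (by positivity)]
      _ ≤ Real.sqrt ((SA' * (n₁ * n₂))^2) := Real.sqrt_le_sqrt hsq
      _ = SA' * (n₁ * n₂) := Real.sqrt_sq (mul_nonneg hSA'nn (mul_nonneg hn₁pos.le hn₂pos.le))
  have hSAcmp : SA' ≤ SA := by
    rw [hSA, hSA']
    apply Real.sqrt_le_sqrt
    have e₁ : 2*(m₁:ℝ)+1 ≤ 2*(s₁:ℝ)-1 := by
      rw [hm₁]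
      have : (((p-1:ℕ)):ℝ) = (p:ℝ) - 1 := by
        push_cast [Nat.cast_sub hp1]; ring
      rw [this]
      have : (p:ℝ) ≤ (s₁:ℝ) := by exact_mod_cast hps
      linarith
    have e₂ : 2*(m₂:ℝ)+1 ≤ 2*(s₂:ℝ)-1 := by
      rw [hm₂]
      have : (((q-1:ℕ)):ℝ) = (q:ℝ) - 1 := by
        push_cast [Nat.cast_sub hq1]; ring
      rw [this]
      have : (q:ℝ) ≤ (s₂:ℝ) := by exact_mod_cast hqs
      linarith
    exact mul_le_mul e₁ e₂ (by positivity) (by linarith [e₁] : (0:ℝ) ≤ 2*(s₁:ℝ)-1)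
  -- put together
  have hmain : A * (Δ * (N:ℝ)) ≤ Real.pi * SA * (n₁ * n₂) := by
    calc A * (Δ * (N:ℝ)) = (A * Δ) * (N:ℝ) := by ring
      _ ≤ (Real.pi * (N:ℝ)^(m₁+m₂)) * (N:ℝ) := mul_le_mul_of_nonneg_right hstep1 hNpos.le
      _ = Real.pi * (N:ℝ)^(m₁+m₂+1) := by rw [pow_succ]; ring
      _ ≤ Real.pi * (SA' * (n₁ * n₂)) := mul_le_mul_of_nonneg_left hstep2 hpi.le
      _ ≤ Real.pi * (SA * (n₁ * n₂)) :=
          mul_le_mul_of_nonneg_left (mul_le_mul_of_nonneg_right hSAcmp (by positivity)) hpi.le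
      _ = Real.pi * SA * (n₁ * n₂) := by ring
  have hgoal : n₁⁻¹ * n₂⁻¹ * A = A / (n₁ * n₂) := by
    rw [div_eq_mul_inv, mul_inv]; ring
  rw [hgoal, div_le_div_iff₀ (by positivity) (by positivity)]
  linarith [hmain]
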